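/- For each $\alpha > 0$ and each $\epsilon > 0$, there exists $t > 0$ such that for all integers $j \ge 1$ and all real $M \ge 1$, $\frac{t^j (\alpha \log M + j)^j}{j!} \le M^{\epsilon}$. -/
import Mathlib


/-- For each `α > 0` and `ε > 0` there is `t > 0` (independent of `j, M`)
such that for all integers `j ≥ 1` and all reals `M ≥ 1`,
`t^j (α log M + j)^j / j! ≤ M^ε`. -/
theorem stmt5 (α ε : ℝ) (hα : 0 < α) (hε : 0 < ε) :
    ∃ t : ℝ, 0 < t ∧ ∀ j : ℕ, 1 ≤ j → ∀ M : ℝ, 1 ≤ M →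
      t ^ j * (α * Real.log M + j) ^ j / (Nat.factorial j) ≤ M ^ ε := by
  set c : ℝ := min (ε / α) 1 with hc
  have hc0 : 0 < c := lt_min (div_pos hε hα) one_pos
  have hc1 : c ≤ 1 := min_le_right _ _
  have hcε : c ≤ ε / α := min_le_left _ _
  refine ⟨c / Real.exp 1, div_pos hc0 (Real.exp_pos 1), ?_⟩
  intro j hj M hM
  have hj0 : (0:ℝ) < j := by exact_mod_cast hj
  have hL : 0 ≤ Real.log M := Real.log_nonneg hM
  set L : ℝ := Real.log M
  set u : ℝ := α * L / j with hu
  have hu0 : 0 ≤ u := div_nonneg (mul_nonneg hα.le hL) hj0.le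
  have hfac : (0:ℝ) < (Nat.factorial j : ℝ) := by exact_mod_cast j.factorial_pos
  -- j^j ≤ e^j * j!
  have hjj : (j:ℝ) ^ j ≤ Real.exp j * (Nat.factorial j : ℝ) := by
    have := Real.pow_div_factorial_le_exp (x := (j:ℝ)) hj0.le j
    rw [div_le_iff₀ hfac] at this
    simpa [Real.exp_nat_mul, mul_comm] using this
  have hA : 0 < α * L + j := by positivity
  -- key: c * (1 + u) ≤ exp ((ε/α) * u)
  have hkey : c * (1 + u) ≤ Real.exp (ε / α * u) := by
    have h1 : c * (1 + u) ≤ 1 + ε / α * u := by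
      have : c * u ≤ ε / α * u := mul_le_mul_of_nonneg_right hcε hu0
      nlinarith
    exact h1.trans (by linarith [Real.add_one_le_exp (ε / α * u)])
  -- rewrite goal
  have hMε : (M : ℝ) ^ ε = Real.exp (ε * L) := by
    rw [Real.rpow_def_of_pos (lt_of_lt_of_le one_pos hM), mul_comm]
  rw [hMε, div_le_iff₀ hfac]
  have hstep : (c / Real.exp 1) ^ j * (α * L + j) ^ j
      = (c * (1 + u)) ^ j * ((j:ℝ) ^ j / Real.exp j) := by
    have he : Real.exp (j:ℝ) = Real.exp 1 ^ j := by
      rw [← Real.exp_nat_mul]; norm_num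
    rw [← mul_pow, he, ← div_pow, ← mul_pow]
    congr 1
    rw [hu]
    field_simp
    ring_nf
  rw [hstep]
  have h2 : (c * (1 + u)) ^ j ≤ Real.exp (ε / α * u) ^ j :=
    pow_le_pow_left₀ (by positivity) hkey j
  have h3 : Real.exp (ε / α * u) ^ j = Real.exp (ε * L) := by
    rw [← Real.exp_nat_mul]
    congr 1
    rw [hu]
    field_simp
  have h4 : (j:ℝ) ^ j / Real.exp j ≤ (Nat.factorial j : ℝ) := by
    rw [div_le_iff₀ (Real.exp_pos _)]
    linarith [hjj]
  calc (c * (1 + u)) ^ j * ((j:ℝ) ^ j / Real.exp j)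
      ≤ Real.exp (ε * L) * (Nat.factorial j : ℝ) := by
        apply mul_le_mul (h3 ▸ h2) h4 (by positivity) (Real.exp_nonneg _)
    _ = Real.exp (ε * L) * (Nat.factorial j : ℝ) := rfl
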